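/- arXiv:2101.07648 — 3 statements merged into one kernel-verified Lean document; each statement's English description precedes it below -/
import Mathlib

section
/- Let X be a nonzero vector in ℝⁿ and F a subspace of ℝⁿ with X ∉ F^⊥. Then the infimum over nonzero Y ∈ F of ψ(X,Y) is attained at the orthogonal projection p_F(X) of X onto F; that is, min_{Y ∈ F \ {0}} ψ(X,Y) = ψ(X, p_F(X)). -/
/-- Sine of the angle between two vectors. -/
noncomputable def psi {n : ℕ} (X Y : EuclideanSpace ℝ (Fin n)) : ℝ :=
  Real.sqrt (1 - (inner ℝ X Y : ℝ) ^ 2 / (‖X‖ ^ 2 * ‖Y‖ ^ 2))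

theorem psi_min_at_orthogonalProjection {n : ℕ} (X : EuclideanSpace ℝ (Fin n))
    (hX : X ≠ 0) (F : Submodule ℝ (EuclideanSpace ℝ (Fin n))) (hXF : X ∉ Fᗮ) :
    IsLeast {r : ℝ | ∃ Y : EuclideanSpace ℝ (Fin n), Y ∈ F ∧ Y ≠ 0 ∧ r = psi X Y}
      (psi X (Submodule.orthogonalProjectionOnto F X : EuclideanSpace ℝ (Fin n))) := by
  set P : EuclideanSpace ℝ (Fin n) := (Submodule.orthogonalProjectionOnto F X : EuclideanSpace ℝ (Fin n)) with hP
  have hPmem : P ∈ F := (Submodule.orthogonalProjectionOnto F X).2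
  have hPne : P ≠ 0 := by
    intro h
    apply hXF
    rw [← Submodule.orthogonalProjectionOnto_eq_zero_iff (K := F)]
    exact Subtype.ext h
  have hXnorm : (0:ℝ) < ‖X‖ ^ 2 := pow_pos (norm_pos_iff.mpr hX) 2
  have hPnorm : (0:ℝ) < ‖P‖ ^ 2 := pow_pos (norm_pos_iff.mpr hPne) 2
  constructor
  · exact ⟨P, hPmem, hPne, rfl⟩
  · rintro r ⟨Y, hYF, hYne, rfl⟩
    have hYnorm : (0:ℝ) < ‖Y‖ ^ 2 := pow_pos (norm_pos_iff.mpr hYne) 2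
    apply Real.sqrt_le_sqrt
    have hinner : (inner ℝ X Y : ℝ) = inner ℝ P Y := by
      have h0 : inner ℝ (X - P) Y = 0 := Submodule.starProjection_inner_eq_zero (K := F) X Y hYF
      rw [inner_sub_left] at h0
      linarith
    have hinnerP : (inner ℝ X P : ℝ) = ‖P‖ ^ 2 := by
      have h0 : inner ℝ (X - P) P = 0 := Submodule.starProjection_inner_eq_zero (K := F) X P hPmem
      rw [inner_sub_left] at h0
      have h2 : (inner ℝ X P : ℝ) = inner ℝ P P := by linarith
      rw [h2, real_inner_self_eq_norm_sq]
    have hCS : (inner ℝ P Y : ℝ) ^ 2 ≤ ‖P‖ ^ 2 * ‖Y‖ ^ 2 := by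
      have := abs_real_inner_le_norm P Y
      calc (inner ℝ P Y : ℝ) ^ 2 = |(inner ℝ P Y : ℝ)| ^ 2 := (sq_abs _).symm
        _ ≤ (‖P‖ * ‖Y‖) ^ 2 := by
            apply pow_le_pow_left₀ (abs_nonneg _) this
        _ = ‖P‖ ^ 2 * ‖Y‖ ^ 2 := by ring
    have key : (inner ℝ X Y : ℝ) ^ 2 / (‖X‖ ^ 2 * ‖Y‖ ^ 2) ≤
        (inner ℝ X P : ℝ) ^ 2 / (‖X‖ ^ 2 * ‖P‖ ^ 2) := by
      rw [hinner, hinnerP]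
      rw [div_le_div_iff₀ (by positivity) (by positivity)]
      calc (inner ℝ P Y : ℝ) ^ 2 * (‖X‖ ^ 2 * ‖P‖ ^ 2)
          ≤ ‖P‖ ^ 2 * ‖Y‖ ^ 2 * (‖X‖ ^ 2 * ‖P‖ ^ 2) := by
            apply mul_le_mul_of_nonneg_right hCS (by positivity)
        _ = (‖P‖ ^ 2) ^ 2 * (‖X‖ ^ 2 * ‖Y‖ ^ 2) := by ring
    linarith
end

section
/- If (η₃, η₅, η₇, η₉) is a rational solution of the system: η₃² − 2η₅² + 2η₅η₇ − η₅η₉ − η₇η₉ + η₉² = 0, −η₃η₇ − η₅η₉ + η₇η₉ − η₉² = 0, −η₃η₇ − η₇² + η₇η₉ = 0, −2η₅η₇ − η₃η₉ + η₇η₉ = 0, and η₃η₇ − 2η₅η₇ + η₅η₉ + η₇η₉ = 0, then η₃ = η₅ = η₇ = η₉ = 0. -/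
/-- The polynomial 2X³ - 4X + 1 has no rational root. -/
lemma no_rat_root_cubic (q : ℚ) : 2 * q ^ 3 - 4 * q + 1 ≠ 0 := by
  intro h
  set n : ℤ := q.num with hn
  set d : ℤ := (q.den : ℤ) with hd
  have hd0 : (q.den : ℚ) ≠ 0 := by positivity
  have hq : (n : ℚ) = q * (q.den : ℚ) := by
    rw [hn]; field_simp [Rat.num_div_den]
    exact (Rat.mul_den_eq_num q).symm
  have key : (2 * n ^ 3 - 4 * n * d ^ 2 + d ^ 3 : ℚ) = 0 := by
    push_cast [hd]
    rw [hq]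
    linear_combination ((q.den : ℚ))^3 * h
  have keyZ : 2 * n ^ 3 - 4 * n * d ^ 2 + d ^ 3 = 0 := by exact_mod_cast key
  have hdeven : (2 : ℤ) ∣ d := by
    have : (2 : ℤ) ∣ d ^ 3 := ⟨2 * n * d ^ 2 - n ^ 3, by linarith⟩
    exact Int.prime_two.dvd_of_dvd_pow this
  obtain ⟨e, he⟩ := hdeven
  rw [he] at keyZ
  have hneven : (2 : ℤ) ∣ n := by
    have : (2 : ℤ) ∣ n ^ 3 := ⟨4 * n * e ^ 2 - 2 * e ^ 3, by ring_nf; ring_nf at keyZ; linarith⟩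
    exact Int.prime_two.dvd_of_dvd_pow this
  have hco := q.reduced
  have h2n : 2 ∣ n.natAbs := Int.natAbs_dvd_natAbs.mpr (by exact_mod_cast hneven)
  have h2d : 2 ∣ q.den := by
    have := Int.natAbs_dvd_natAbs.mpr (⟨e, he⟩ : (2:ℤ) ∣ d)
    simpa [hd] using this
  have : (2 : ℕ) ∣ 1 := hco ▸ Nat.dvd_gcd h2n h2d
  norm_num at this

/-- a² = 2b² forces a = b = 0 over ℚ. -/
lemma sq_eq_two_sq (a b : ℚ) (h : a ^ 2 = 2 * b ^ 2) : a = 0 ∧ b = 0 := by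
  by_cases hb : b = 0
  · subst hb
    constructor
    · nlinarith [h]
    · rfl
  · exfalso
    set x : ℚ := a / b with hx
    have hx2 : x ^ 2 = 2 := by
      rw [hx]; field_simp; linarith
    have : Real.sqrt 2 = |((x : ℚ) : ℝ)| := by
      rw [show (2 : ℝ) = ((x : ℚ) : ℝ) ^ 2 by exact_mod_cast hx2.symm]
      exact Real.sqrt_sq_eq_abs _
    have : Real.sqrt 2 = ((|x| : ℚ) : ℝ) := by rw [this]; push_cast; ring
    exact Rat.not_irrational |x| (this ▸ irrational_sqrt_two)

theorem plucker_system_only_trivial_solution (η₃ η₅ η₇ η₉ : ℚ)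
    (h1 : η₃ ^ 2 - 2 * η₅ ^ 2 + 2 * η₅ * η₇ - η₅ * η₉ - η₇ * η₉ + η₉ ^ 2 = 0)
    (h2 : -(η₃ * η₇) - η₅ * η₉ + η₇ * η₉ - η₉ ^ 2 = 0)
    (h3 : -(η₃ * η₇) - η₇ ^ 2 + η₇ * η₉ = 0)
    (h4 : -(2 * η₅ * η₇) - η₃ * η₉ + η₇ * η₉ = 0)
    (h5 : η₃ * η₇ - 2 * η₅ * η₇ + η₅ * η₉ + η₇ * η₉ = 0) :
    η₃ = 0 ∧ η₅ = 0 ∧ η₇ = 0 ∧ η₉ = 0 := by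
  by_cases hc : η₇ = 0
  · subst hc
    -- h5 : η₅ * η₉ = 0 ; h2 : -η₅η₉ - η₉² = 0 → η₉ = 0
    have h9 : η₉ = 0 := by nlinarith [h2, h5]
    subst h9
    have h35 : η₃ ^ 2 = 2 * η₅ ^ 2 := by linarith [h1]
    obtain ⟨ha, hb⟩ := sq_eq_two_sq η₃ η₅ h35
    exact ⟨ha, hb, rfl, rfl⟩
  · exfalso
    -- from h3 : η₃ = η₉ - η₇
    have ha : η₃ = η₉ - η₇ := by
      have h3' : η₇ * η₃ = η₇ * (η₉ - η₇) := by ring_nf; ring_nf at h3; linarith [h3]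
      exact mul_left_cancel₀ hc h3'
    by_cases hd : η₉ = 0
    · subst hd
      -- h2 : -η₃η₇ = 0, with h3 gives η₇² = 0
      apply hc
      have : η₇ ^ 2 = 0 := by linarith [h2, h3]
      exact pow_eq_zero_iff (by norm_num) |>.mp this
    · -- b = (2cd - d²)/(2c)
      have hA : 2 * η₅ * η₇ = 2 * η₇ * η₉ - η₉ ^ 2 := by linarith [h2, h5]
      have hb : η₅ = (2 * η₇ * η₉ - η₉ ^ 2) / (2 * η₇) := by
        field_simp
        linarith [hA]
      have hfact : (η₇ - η₉) * (2 * η₇ ^ 3 - 4 * η₇ * η₉ ^ 2 + η₉ ^ 3) = 0 := by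
        have h1' := h1
        rw [ha, hb] at h1'
        field_simp at h1'
        nlinarith [h1']
      rcases mul_eq_zero.mp hfact with hcd | hcub
      · -- η₇ = η₉, then η₃ = 0, h2 gives η₅ η₇ = -... contradiction via h5
        have hcd' : η₇ = η₉ := by linarith
        apply hc
        have ha0 : η₃ = 0 := by rw [ha, ← hcd']; ring
        -- h2 with a=0, d=c : -η₅ η₇ = 0 → η₅ = 0 ; h5 : η₇² = 0
        have hb0 : η₅ * η₇ = 0 := by
          rw [ha0, ← hcd'] at h2; linarith [h2]
        have : η₇ ^ 2 = 0 := by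
          rw [ha0, ← hcd'] at h5; nlinarith [h5, hb0]
        exact pow_eq_zero_iff (by norm_num) |>.mp this
      · -- cubic: divide by η₉³
        have hx : 2 * (η₇ / η₉) ^ 3 - 4 * (η₇ / η₉) + 1 = 0 := by
          field_simp
          linear_combination hcub
        exact no_rat_root_cubic _ hx
end

section
/- Let F be a subspace of ℝⁿ, let c ∈ (0,1], and let 𝓡 be a set of nonzero vectors of ℝⁿ, disjoint from F^⊥, such that ‖p_F(X)‖ ≥ c‖X‖ for all X ∈ 𝓡, where p_F is orthogonal projection onto F. Then for every X ∈ F \ {0} and every Y ∈ 𝓡, one has ψ(X, p_F(Y)) ≤ √(2/c)·ψ(X,Y). -/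
theorem psi_projection_le
    {n : ℕ} (F : Submodule ℝ (EuclideanSpace ℝ (Fin n))) (c : ℝ)
    (hc : c ∈ Set.Ioc (0 : ℝ) 1)
    (R : Set (EuclideanSpace ℝ (Fin n))) (hR0 : (0 : EuclideanSpace ℝ (Fin n)) ∉ R)
    (hRF : ∀ X ∈ R, X ∉ (Fᗮ : Submodule ℝ (EuclideanSpace ℝ (Fin n))))
    (hproj : ∀ X ∈ R, c * ‖X‖ ≤ ‖(Submodule.orthogonalProjection F X : EuclideanSpace ℝ (Fin n))‖) :
    ∀ X ∈ F, X ≠ 0 → ∀ Y ∈ R,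
      psi X (Submodule.orthogonalProjection F Y : EuclideanSpace ℝ (Fin n)) ≤
        Real.sqrt (2 / c) * psi X Y := by
  intro X hX hX0 Y hY
  obtain ⟨hc0, hc1⟩ := hc
  set P : EuclideanSpace ℝ (Fin n) := (Submodule.orthogonalProjection F Y : EuclideanSpace ℝ (Fin n))
  have hY0 : Y ≠ 0 := fun h => hR0 (h ▸ hY)
  have hYpos : (0 : ℝ) < ‖Y‖ := norm_pos_iff.mpr hY0
  have hPpos : (0 : ℝ) < ‖P‖ :=
    lt_of_lt_of_le (by positivity) (hproj Y hY)
  have hXpos : (0 : ℝ) < ‖X‖ := norm_pos_iff.mpr hX0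
  -- inner X Y = inner X P
  have hmem : Y - P ∈ Fᗮ := Submodule.sub_starProjection_mem_orthogonal (K := F) Y
  have hinner : (inner ℝ X Y : ℝ) = inner ℝ X P := by
    have h0 : (inner ℝ X (Y - P) : ℝ) = 0 :=
      Submodule.inner_right_of_mem_orthogonal hX hmem
    have := inner_sub_right (𝕜 := ℝ) X Y P
    rw [h0] at this
    linarith
  have hPY : ‖P‖ ≤ ‖Y‖ := by
    calc ‖P‖ ≤ ‖Submodule.orthogonalProjection F‖ * ‖Y‖ := (Submodule.orthogonalProjection F).le_opNorm Y
      _ ≤ 1 * ‖Y‖ := by gcongr; exact Submodule.orthogonalProjectionOnto_norm_le F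
      _ = ‖Y‖ := one_mul _
  -- psi X P ≤ psi X Y
  have h1 : psi X P ≤ psi X Y := by
    unfold psi
    apply Real.sqrt_le_sqrt
    rw [hinner]
    have : (inner ℝ X P : ℝ) ^ 2 / (‖X‖ ^ 2 * ‖Y‖ ^ 2) ≤
        (inner ℝ X P : ℝ) ^ 2 / (‖X‖ ^ 2 * ‖P‖ ^ 2) := by
      gcongr
    linarith
  have h2 : (1 : ℝ) ≤ Real.sqrt (2 / c) := by
    rw [show (1 : ℝ) = Real.sqrt 1 by simp]
    apply Real.sqrt_le_sqrt
    rw [le_div_iff₀ hc0]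
    linarith
  have h3 : 0 ≤ psi X Y := Real.sqrt_nonneg _
  calc psi X P ≤ psi X Y := h1
    _ = 1 * psi X Y := (one_mul _).symm
    _ ≤ Real.sqrt (2 / c) * psi X Y := by gcongr
end
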